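/- arXiv:2104.09369 — 3 statements merged into one kernel-verified Lean document; each statement's English description precedes it below -/
import Mathlib

section
/- Fix N, S ≥ 1 and L ≥ 1. Let Â ∈ ℝ^{N×N} have nonnegative entries and let W^{(0)}, …, W^{(L−1)} be real weight matrices of compatible sizes with W^{(0)} having S rows. For an input X ∈ ℝ^{N×S} define hidden states H^{(0)} = X and H^{(l+1)} = ReLU(Â H^{(l)} W^{(l)}) entrywise, and for a perturbed input X' = X + U define H'^{(l)} analogously with H'^{(0)} = X'. Then for every l with 1 ≤ l ≤ L, entrywise |H'^{(l)} − H^{(l)}| ≤ Â^l · |U| · |W^{(0)}| · |W^{(1)}| ⋯ |W^{(l−1)}|. -/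
/-!
The perturbation `H'ˡ - Hˡ` starts as `U`. ReLU is 1-Lipschitz, so one layer turns an entrywise
bound `|H'ˡ - Hˡ| ≤ C` into `|H'ˡ⁺¹ - Hˡ⁺¹| ≤ |Â (H'ˡ - Hˡ) Wˡ| ≤ Â C |Wˡ|`, using `Â ≥ 0` and
the triangle inequality in each matrix product; iterating gives `Âˡ |U| |W⁰| ⋯ |Wˡ⁻¹|`.
-/

def relu (x : ℝ) : ℝ := max x 0

theorem abs_relu_sub_relu_le (a b : ℝ) : |relu a - relu b| ≤ |a - b| :=
  abs_max_sub_max_le_abs a b 0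

namespace Matrix

variable {α : Type*} [Ring α] [LinearOrder α] [IsStrictOrderedRing α]
  {l m n : Type*} [Fintype m]

theorem abs_mul_apply_le_of_nonneg_of_abs_le {A : Matrix l m α} {B C : Matrix m n α}
    (hA : ∀ i k, 0 ≤ A i k) (hBC : ∀ k j, |B k j| ≤ C k j) (i : l) (j : n) :
    |(A * B) i j| ≤ (A * C) i j := by
  rw [mul_apply, mul_apply]
  refine (Finset.abs_sum_le_sum_abs _ _).trans (Finset.sum_le_sum fun k _ => ?_)
  rw [abs_mul, abs_of_nonneg (hA i k)]
  exact mul_le_mul_of_nonneg_left (hBC k j) (hA i k)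

theorem abs_mul_apply_le_of_abs_le {B C : Matrix l m α} (W : Matrix m n α)
    (hBC : ∀ i k, |B i k| ≤ C i k) (i : l) (j : n) :
    |(B * W) i j| ≤ (C * W.map (fun x => |x|)) i j := by
  rw [mul_apply, mul_apply]
  refine (Finset.abs_sum_le_sum_abs _ _).trans (Finset.sum_le_sum fun k _ => ?_)
  rw [abs_mul, map_apply]
  exact mul_le_mul_of_nonneg_right (hBC i k) (abs_nonneg _)

end Matrix

theorem abs_gcn_layer_sub_le {N p q : ℕ} {Ahat : Matrix (Fin N) (Fin N) ℝ}
    (hA : ∀ i j, 0 ≤ Ahat i j) (W : Matrix (Fin p) (Fin q) ℝ)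
    {G G' C : Matrix (Fin N) (Fin p) ℝ} (hC : ∀ i j, |G' i j - G i j| ≤ C i j) (i : Fin N)
    (j : Fin q) :
    |(Ahat * G' * W).map relu i j - (Ahat * G * W).map relu i j| ≤
      (Ahat * C * W.map (fun x => |x|)) i j := by
  have hdiff : (Ahat * G' * W) i j - (Ahat * G * W) i j = (Ahat * (G' - G) * W) i j := by
    rw [Matrix.mul_sub, Matrix.sub_mul, Matrix.sub_apply]
  calc |(Ahat * G' * W).map relu i j - (Ahat * G * W).map relu i j|
      ≤ |(Ahat * (G' - G) * W) i j| := hdiff ▸ abs_relu_sub_relu_le _ _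
    _ ≤ (Ahat * C * W.map (fun x => |x|)) i j :=
      Matrix.abs_mul_apply_le_of_abs_le W
        (Matrix.abs_mul_apply_le_of_nonneg_of_abs_le hA hC) i j

theorem entrywise_abs_hidden_state_diff_le_general
    (N L : ℕ)
    (dims : ℕ → ℕ)
    (Ahat : Matrix (Fin N) (Fin N) ℝ) (hA : ∀ i j, 0 ≤ Ahat i j)
    (W : (l : ℕ) → Matrix (Fin (dims l)) (Fin (dims (l + 1))) ℝ)
    (X U : Matrix (Fin N) (Fin (dims 0)) ℝ)
    (H H' : (l : ℕ) → Matrix (Fin N) (Fin (dims l)) ℝ)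
    (hH0 : H 0 = X) (hH'0 : H' 0 = X + U)
    (hHrec : ∀ l, H (l + 1) = (Ahat * H l * W l).map relu)
    (hH'rec : ∀ l, H' (l + 1) = (Ahat * H' l * W l).map relu)
    (WP : (l : ℕ) → Matrix (Fin (dims 0)) (Fin (dims l)) ℝ)
    (hWP0 : WP 0 = 1)
    (hWPrec : ∀ l, WP (l + 1) = WP l * (W l).map (fun x => |x|)) :
    ∀ l, 1 ≤ l → l ≤ L → ∀ i j,
      |H' l i j - H l i j| ≤ (Ahat ^ l * (U.map (fun x => |x|)) * WP l) i j := by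
  suffices h : ∀ l i j, |H' l i j - H l i j| ≤ (Ahat ^ l * U.map (fun x => |x|) * WP l) i j from
    fun l _ _ => h l
  intro l
  induction l with
  | zero => simp [hH0, hH'0, hWP0]
  | succ l ih =>
    have hbound : Ahat ^ (l + 1) * U.map (fun x => |x|) * WP (l + 1) =
        Ahat * (Ahat ^ l * U.map (fun x => |x|) * WP l) * (W l).map (fun x => |x|) := by
      simp only [hWPrec, pow_succ', Matrix.mul_assoc]
    rw [hHrec, hH'rec, hbound]
    exact abs_gcn_layer_sub_le hA (W l) ih

/-- Inductive multi-layer diffusion bound for a GCN.  With hidden states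
`H⁰ = X`, `H^{l+1} = ReLU(Â H^l W^l)` and perturbed hidden states starting from
`X' = X + U`, and with `WP l = |W⁰| ⋯ |W^{l-1}|` the product of the entrywise
absolute values of the weight matrices, one has for every `1 ≤ l ≤ L` the
entrywise bound `|H'^l − H^l| ≤ Â^l |U| (WP l)`. -/
theorem entrywise_abs_hidden_state_diff_le
    (N L : ℕ) (hN : 1 ≤ N) (hL : 1 ≤ L)
    (dims : ℕ → ℕ) (S : ℕ) (hS : dims 0 = S) (hS1 : 1 ≤ S)
    (Ahat : Matrix (Fin N) (Fin N) ℝ) (hA : ∀ i j, 0 ≤ Ahat i j)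
    (W : (l : ℕ) → Matrix (Fin (dims l)) (Fin (dims (l + 1))) ℝ)
    (X U : Matrix (Fin N) (Fin (dims 0)) ℝ)
    (H H' : (l : ℕ) → Matrix (Fin N) (Fin (dims l)) ℝ)
    (hH0 : H 0 = X) (hH'0 : H' 0 = X + U)
    (hHrec : ∀ l, H (l + 1) = (Ahat * H l * W l).map relu)
    (hH'rec : ∀ l, H' (l + 1) = (Ahat * H' l * W l).map relu)
    (WP : (l : ℕ) → Matrix (Fin (dims 0)) (Fin (dims l)) ℝ)
    (hWP0 : WP 0 = 1)
    (hWPrec : ∀ l, WP (l + 1) = WP l * (W l).map (fun x => |x|)) :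
    ∀ l, 1 ≤ l → l ≤ L → ∀ i j,
      |H' l i j - H l i j| ≤ (Ahat ^ l * (U.map (fun x => |x|)) * WP l) i j :=
  entrywise_abs_hidden_state_diff_le_general N L dims Ahat hA W X U H H' hH0 hH'0 hHrec hH'rec WP
    hWP0 hWPrec
end

section
/- Fix N, S ≥ 1 and L ≥ 1. Let Â ∈ ℝ^{N×N} have nonnegative entries, let W^{(0)}, …, W^{(L−1)} be real weight matrices of compatible sizes with W^{(0)} having S rows, and let g : ℝ^{d} → ℝ^{T} be an arbitrary function (with d the number of columns of W^{(L−1)}). Define the L-layer GCN f by: H^{(0)} = X ∈ ℝ^{N×S}, H^{(l+1)} = ReLU(Â H^{(l)} W^{(l)}) entrywise for 0 ≤ l ≤ L−2, and f(X)_{i·} = g((Â H^{(L−1)} W^{(L−1)})_{i·}). Let i be a node and let U ∈ ℝ^{N×S} be a perturbation such that for every node h whose row U_{h·} is nonzero one has (Â^L)_{ih} = 0. Then f(X+U)_{i·} = f(X)_{i·}, i.e., the perturbation has no effect on the prediction at node i. -/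
namespace Matrix

section Nonneg

variable {ι R : Type*} [Fintype ι] [Semiring R] [PartialOrder R] [IsStrictOrderedRing R]
  {A B : Matrix ι ι R}

theorem mul_apply_pos (hA : ∀ i j, 0 ≤ A i j) (hB : ∀ i j, 0 ≤ B i j) {i j k : ι}
    (hij : 0 < A i j) (hjk : 0 < B j k) : 0 < (A * B) i k :=
  Finset.sum_pos' (fun l _ => mul_nonneg (hA i l) (hB l k))
    ⟨j, Finset.mem_univ j, mul_pos hij hjk⟩

theorem pow_succ_apply_ne_zero [DecidableEq ι] (hA : ∀ i j, 0 ≤ A i j) {n : ℕ} {i j h : ι}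
    (hij : (A ^ n) i j ≠ 0) (hjh : A j h ≠ 0) : (A ^ (n + 1)) i h ≠ 0 := by
  have hAn := pow_apply_nonneg hA n
  rw [pow_succ]
  exact (mul_apply_pos hAn hA ((hAn i j).lt_of_ne' hij) ((hA j h).lt_of_ne' hjh)).ne'

end Nonneg

theorem mul_row_eq_of_eq_on_support {ι κ μ α : Type*} [Fintype ι]
    [NonUnitalNonAssocSemiring α] {A : Matrix μ ι α} {M M' : Matrix ι κ α} {i : μ}
    (h : ∀ j, A i j ≠ 0 → M j = M' j) : (A * M) i = (A * M') i := by
  ext k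
  simp only [mul_apply]
  refine Finset.sum_congr rfl fun j _ => ?_
  by_cases hj : A i j = 0
  · simp [hj]
  · rw [h j hj]

theorem mul_mul_row_eq_of_eq_on_support {ι κ ν μ α : Type*} [Fintype ι] [Fintype κ]
    [NonUnitalNonAssocSemiring α] {A : Matrix μ ι α} {M M' : Matrix ι κ α} (W : Matrix κ ν α)
    {i : μ} (h : ∀ j, A i j ≠ 0 → M j = M' j) : (A * M * W) i = (A * M' * W) i := by
  ext k
  rw [mul_apply, mul_apply, mul_row_eq_of_eq_on_support h]

end Matrix

open Matrix in
theorem gcn_row_eq_of_pow_ne_zero {ι R : Type*} {κ : ℕ → Type*} [Fintype ι] [DecidableEq ι]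
    [∀ l, Fintype (κ l)] [Semiring R] [PartialOrder R] [IsStrictOrderedRing R]
    {σ : R → R} {A : Matrix ι ι R} (hA : ∀ i j, 0 ≤ A i j)
    {W : (l : ℕ) → Matrix (κ l) (κ (l + 1)) R} {H H' : (l : ℕ) → Matrix ι (κ l) R} {n : ℕ}
    (hrec : ∀ l < n, H (l + 1) = (A * H l * W l).map σ)
    (hrec' : ∀ l < n, H' (l + 1) = (A * H' l * W l).map σ) {i : ι}
    (h0 : ∀ j, (A ^ (n + 1)) i j ≠ 0 → H' 0 j = H 0 j) :
    ∀ m k, m + k = n → ∀ j, (A ^ (k + 1)) i j ≠ 0 → H' m j = H m j := by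
  intro m
  induction m with
  | zero => rintro k rfl; simpa using h0
  | succ m ih =>
    intro k hmk j hj
    have hrows : (A * H' m * W m) j = (A * H m * W m) j :=
      mul_mul_row_eq_of_eq_on_support (W m) fun h hjh =>
        ih (k + 1) (by omega) h (pow_succ_apply_ne_zero hA hj hjh)
    rw [hrec m (by omega), hrec' m (by omega)]
    ext c
    simp only [map_apply, congrFun hrows c]

theorem attack_outside_L_hop_no_effect_general
    (N L' T : ℕ)
    (L : ℕ) (hLdef : L = L' + 1)
    (dims : ℕ → ℕ)
    (Ahat : Matrix (Fin N) (Fin N) ℝ) (hA : ∀ i j, 0 ≤ Ahat i j)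
    (W : (l : ℕ) → Matrix (Fin (dims l)) (Fin (dims (l + 1))) ℝ)
    (g : (Fin (dims (L' + 1)) → ℝ) → (Fin T → ℝ))
    (X U : Matrix (Fin N) (Fin (dims 0)) ℝ)
    (H H' : (l : ℕ) → Matrix (Fin N) (Fin (dims l)) ℝ)
    (hH0 : H 0 = X) (hH'0 : H' 0 = X + U)
    (hHrec : ∀ l, l + 2 ≤ L → H (l + 1) = (Ahat * H l * W l).map relu)
    (hH'rec : ∀ l, l + 2 ≤ L → H' (l + 1) = (Ahat * H' l * W l).map relu)
    (i : Fin N)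
    (hU : ∀ h : Fin N, (∃ k, U h k ≠ 0) → (Ahat ^ L) i h = 0) :
    g ((Ahat * H' L' * W L') i) = g ((Ahat * H L' * W L') i) := by
  subst hLdef
  have hinput : ∀ j, (Ahat ^ (L' + 1)) i j ≠ 0 → H' 0 j = H 0 j := by
    intro j hj
    have hUj : U j = 0 := by
      by_contra hne
      exact hj (hU j (Function.ne_iff.mp hne))
    ext c
    simp [hH0, hH'0, congrFun hUj c]
  have hlast := gcn_row_eq_of_pow_ne_zero hA (fun l hl => hHrec l (by omega))
    (fun l hl => hH'rec l (by omega)) hinput L' 0 (add_zero L')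
  rw [Matrix.mul_mul_row_eq_of_eq_on_support (W L') fun j hj => hlast j (by simpa using hj)]

/-- Qualitative content of Proposition 1: for an `L`-layer GCN (here
`L = L' + 1 ≥ 1`) with nonnegative propagation matrix `Â`, if every node `h`
whose perturbation row `U_{h·}` is nonzero satisfies `(Â^L)_{ih} = 0`, then the
perturbation `U` has no effect on the prediction at node `i`. -/
theorem attack_outside_L_hop_no_effect
    (N L' T : ℕ) (hN : 1 ≤ N)
    (L : ℕ) (hLdef : L = L' + 1)
    (dims : ℕ → ℕ) (S : ℕ) (hS : dims 0 = S) (hS1 : 1 ≤ S)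
    (Ahat : Matrix (Fin N) (Fin N) ℝ) (hA : ∀ i j, 0 ≤ Ahat i j)
    (W : (l : ℕ) → Matrix (Fin (dims l)) (Fin (dims (l + 1))) ℝ)
    (g : (Fin (dims (L' + 1)) → ℝ) → (Fin T → ℝ))
    (X U : Matrix (Fin N) (Fin (dims 0)) ℝ)
    (H H' : (l : ℕ) → Matrix (Fin N) (Fin (dims l)) ℝ)
    (hH0 : H 0 = X) (hH'0 : H' 0 = X + U)
    (hHrec : ∀ l, l + 2 ≤ L → H (l + 1) = (Ahat * H l * W l).map relu)
    (hH'rec : ∀ l, l + 2 ≤ L → H' (l + 1) = (Ahat * H' l * W l).map relu)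
    (i : Fin N)
    (hU : ∀ h : Fin N, (∃ k, U h k ≠ 0) → (Ahat ^ L) i h = 0) :
    g ((Ahat * H' L' * W L') i) = g ((Ahat * H L' * W L') i) :=
  attack_outside_L_hop_no_effect_general N L' T L hLdef dims Ahat hA W g X U H H' hH0 hH'0 hHrec
    hH'rec i hU
end

section
/- Let G be a simple graph on vertex set {1, …, N} with real adjacency matrix A, let Ã = A + I, let D̃ be the diagonal matrix with D̃_{ii} = (degree of i in G) + 1, and let Â = D̃^{−1/2} Ã D̃^{−1/2}. Fix L ≥ 1, weight matrices W^{(0)}, …, W^{(L−1)} of compatible sizes with W^{(0)} having S rows, and an arbitrary readout g : ℝ^{d} → ℝ^{T}. Define the L-layer GCN f by H^{(0)} = X ∈ ℝ^{N×S}, H^{(l+1)} = ReLU(Â H^{(l)} W^{(l)}) entrywise for 0 ≤ l ≤ L−2, and f(X)_{i·} = g((Â H^{(L−1)} W^{(L−1)})_{i·}). If U ∈ ℝ^{N×S} is a perturbation such that every node h with nonzero row U_{h·} admits no walk in G from i to h of length at most L, then f(X+U)_{i·} = f(X)_{i·}. -/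
open Matrix

namespace SimpleGraph

variable {V : Type*} {G : SimpleGraph V}

lemma exists_walk_length_le_of_edist_le {u v : V} {n : ℕ} (h : G.edist u v ≤ n) :
    ∃ p : G.Walk u v, p.length ≤ n := by
  obtain ⟨p, hp⟩ := exists_walk_of_edist_ne_top (ne_top_of_le_ne_top (ENat.natCast_ne_top n) h)
  exact ⟨p, by exact_mod_cast hp ▸ h⟩

lemma edist_le_one_of_diagonal_mul_adjMatrix_add_one_mul_diagonal_ne_zero [Fintype V]
    [DecidableEq V] [DecidableRel G.Adj] {R : Type*} [Semiring R] (d e : V → R) {j k : V}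
    (h : (diagonal d * (G.adjMatrix R + 1) * diagonal e) j k ≠ 0) : G.edist j k ≤ 1 := by
  rw [edist_le_one_iff_adj_or_eq]
  by_contra! hjk
  simp [one_apply, hjk.1, hjk.2] at h

end SimpleGraph

section Locality

open SimpleGraph

variable {V R : Type*} [Fintype V] [Semiring R] {G : SimpleGraph V} {A : Matrix V V R}

lemma Matrix.mul_apply_eq_of_forall_ne_zero {p : Type*} {M M' : Matrix V p R} {j : V}
    (h : ∀ n, A j n ≠ 0 → M' n = M n) : (A * M') j = (A * M) j := by
  ext k
  refine Finset.sum_congr rfl fun n _ => ?_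
  by_cases hn : A j n = 0
  · simp [hn]
  · exact congrArg (A j n * ·) (congrFun (h n hn) k)

lemma mul_mul_apply_eq_of_edist_le (hA : ∀ j k, A j k ≠ 0 → G.edist j k ≤ 1)
    {p q : Type*} [Fintype p] (W : Matrix p q R) {M M' : Matrix V p R} {i j : V} {r : ℕ∞}
    (hM : ∀ n, G.edist i n ≤ r + 1 → M' n = M n) (hj : G.edist i j ≤ r) :
    (A * M' * W) j = (A * M * W) j := by
  have hrow : (A * M') j = (A * M) j := Matrix.mul_apply_eq_of_forall_ne_zero fun n hn =>
    hM n ((G.edist_triangle).trans (add_le_add hj (hA j n hn)))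
  ext k
  exact congrArg (fun v => ∑ x, v x * W x k) hrow

lemma gcn_hidden_apply_eq_of_edist_le (hA : ∀ j k, A j k ≠ 0 → G.edist j k ≤ 1)
    (σ : R → R) {dims : ℕ → ℕ} (W : (l : ℕ) → Matrix (Fin (dims l)) (Fin (dims (l + 1))) R)
    {H H' : (l : ℕ) → Matrix V (Fin (dims l)) R} {K : ℕ}
    (hH : ∀ l < K, H (l + 1) = (A * H l * W l).map σ)
    (hH' : ∀ l < K, H' (l + 1) = (A * H' l * W l).map σ) (i : V) :
    ∀ l ≤ K, ∀ r : ℕ∞, (∀ j, G.edist i j ≤ r + l → H' 0 j = H 0 j) →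
      ∀ j, G.edist i j ≤ r → H' l j = H l j := by
  intro l
  induction l with
  | zero => simp
  | succ l ih =>
    intro hl r h0 j hj
    have hprev : ∀ n, G.edist i n ≤ r + 1 → H' l n = H l n :=
      ih (by omega) (r + 1) fun n hn =>
        h0 n (by rwa [Nat.cast_succ, add_comm (l : ℕ∞), ← add_assoc])
    rw [hH l hl, hH' l hl]
    exact congrArg (σ ∘ ·) (mul_mul_apply_eq_of_edist_le hA (W l) hprev hj)

end Locality

theorem gcn_attack_outside_L_hop_no_effect_general
    (N L' T : ℕ)
    (L : ℕ) (hLdef : L = L' + 1)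
    (G : SimpleGraph (Fin N)) [DecidableRel G.Adj]
    (Ahat : Matrix (Fin N) (Fin N) ℝ)
    (hAhat : Ahat =
      Matrix.diagonal (fun v => (Real.sqrt ((G.degree v : ℝ) + 1))⁻¹)
        * (G.adjMatrix ℝ + 1)
        * Matrix.diagonal (fun v => (Real.sqrt ((G.degree v : ℝ) + 1))⁻¹))
    (dims : ℕ → ℕ)
    (W : (l : ℕ) → Matrix (Fin (dims l)) (Fin (dims (l + 1))) ℝ)
    (g : (Fin (dims (L' + 1)) → ℝ) → (Fin T → ℝ))
    (X U : Matrix (Fin N) (Fin (dims 0)) ℝ)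
    (H H' : (l : ℕ) → Matrix (Fin N) (Fin (dims l)) ℝ)
    (hH0 : H 0 = X) (hH'0 : H' 0 = X + U)
    (hHrec : ∀ l, l + 2 ≤ L → H (l + 1) = (Ahat * H l * W l).map relu)
    (hH'rec : ∀ l, l + 2 ≤ L → H' (l + 1) = (Ahat * H' l * W l).map relu)
    (i : Fin N)
    (hU : ∀ h : Fin N, (∃ k, U h k ≠ 0) →
      ¬ ∃ p : G.Walk i h, p.length ≤ L) :
    g ((Ahat * H' L' * W L') i) = g ((Ahat * H L' * W L') i) := by
  subst hLdef
  have hA : ∀ j k, Ahat j k ≠ 0 → G.edist j k ≤ 1 := fun j k =>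
    hAhat ▸ SimpleGraph.edist_le_one_of_diagonal_mul_adjMatrix_add_one_mul_diagonal_ne_zero _ _
  have hinput : ∀ j, G.edist i j ≤ (1 : ℕ∞) + L' → H' 0 j = H 0 j := by
    intro j hj
    have hUj : U j = 0 := by
      by_contra hne
      exact hU j (Function.ne_iff.mp hne)
        (SimpleGraph.exists_walk_length_le_of_edist_le (by rwa [add_comm] at hj))
    rw [hH'0, hH0]
    funext k
    simp [Matrix.add_apply, congrFun hUj k]
  have hhidden := gcn_hidden_apply_eq_of_edist_le hA relu W (fun l hl => hHrec l (by omega))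
    (fun l hl => hH'rec l (by omega)) i L' le_rfl 1 hinput
  exact congrArg g (mul_mul_apply_eq_of_edist_le hA (W L') (r := 0) (by simpa using hhidden)
    (by simp))

/-- Proposition 1 of the paper, instantiated with the standard normalized
adjacency matrix `Â = D̃^{−1/2} (A + I) D̃^{−1/2}` of a simple graph `G` on
`{1, …, N}` (with `D̃_{ii} = deg(i) + 1`): for an `L`-layer GCN (here
`L = L' + 1 ≥ 1`), if every node `h` with a nonzero perturbation row `U_{h·}`
admits no walk in `G` from `i` to `h` of length at most `L`, then the
perturbation does not change the prediction at node `i`. -/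
theorem gcn_attack_outside_L_hop_no_effect
    (N L' T : ℕ) (hN : 1 ≤ N)
    (L : ℕ) (hLdef : L = L' + 1)
    (G : SimpleGraph (Fin N)) [DecidableRel G.Adj]
    (Ahat : Matrix (Fin N) (Fin N) ℝ)
    (hAhat : Ahat =
      Matrix.diagonal (fun v => (Real.sqrt ((G.degree v : ℝ) + 1))⁻¹)
        * (G.adjMatrix ℝ + 1)
        * Matrix.diagonal (fun v => (Real.sqrt ((G.degree v : ℝ) + 1))⁻¹))
    (dims : ℕ → ℕ) (S : ℕ) (hS : dims 0 = S) (hS1 : 1 ≤ S)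
    (W : (l : ℕ) → Matrix (Fin (dims l)) (Fin (dims (l + 1))) ℝ)
    (g : (Fin (dims (L' + 1)) → ℝ) → (Fin T → ℝ))
    (X U : Matrix (Fin N) (Fin (dims 0)) ℝ)
    (H H' : (l : ℕ) → Matrix (Fin N) (Fin (dims l)) ℝ)
    (hH0 : H 0 = X) (hH'0 : H' 0 = X + U)
    (hHrec : ∀ l, l + 2 ≤ L → H (l + 1) = (Ahat * H l * W l).map relu)
    (hH'rec : ∀ l, l + 2 ≤ L → H' (l + 1) = (Ahat * H' l * W l).map relu)
    (i : Fin N)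
    (hU : ∀ h : Fin N, (∃ k, U h k ≠ 0) →
      ¬ ∃ p : G.Walk i h, p.length ≤ L) :
    g ((Ahat * H' L' * W L') i) = g ((Ahat * H L' * W L') i) :=
  gcn_attack_outside_L_hop_no_effect_general N L' T L hLdef G Ahat hAhat dims W g X U H H' hH0 hH'0
    hHrec hH'rec i hU
end
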